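/- Let k be a commutative ring, V a brace algebra over k, and * the product on the tensor coalgebra T(V) determined by 1*B = B and (X⊗A)*B = B(1)·X{B(2)}·(A*B(3)). Then: (a) for all X_1,…,X_n ∈ V and B ∈ T(V), (X_1⊗⋯⊗X_n)*B = B(1)·X_1{B(2)}·B(3)⋯B(2n−1)·X_n{B(2n)}·B(2n+1) (iterated Sweedler notation for the deconcatenation coproduct); (b) the brace identity takes the form X{B}{C} = X{B*C} for all X ∈ V and B, C ∈ T(V). -/
import Mathlib


open TensorProduct

/-- All decompositions of a list `A` into `j` (possibly empty) consecutive blocks. -/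
def cuts {V : Type*} : ℕ → List V → List (List (List V))
  | 0, A => if A.isEmpty then [[]] else []
  | j + 1, A =>
      (List.range (A.length + 1)).flatMap
        fun i => (cuts j (A.drop i)).map fun P => A.take i :: P

/-- Given `Ys = [Y_1, …, Y_n]` and a decomposition `P = [A_1, …, A_{2n+1}]` of a list into
`2n+1` consecutive blocks, the argument list
`A_1 ++ [Y_1{A_2}] ++ A_3 ++ ⋯ ++ A_{2n-1} ++ [Y_n{A_{2n}}] ++ A_{2n+1}`. -/
def interleave {V : Type*} (br : V → List V → V) : List V → List (List V) → List V
  | [], P => P.flatten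
  | Y :: Ys, A1 :: A2 :: P => A1 ++ br Y A2 :: interleave br Ys P
  | _ :: _, _ => []

/-- A brace algebra over `k`: a `k`-module `V` with operations
`(X, Y_1, …, Y_n) ↦ X{Y_1, …, Y_n}` (encoded as `br : V → List V → V`), `k`-linear in each
argument, with `X{} = X`, satisfying the brace identity
`X{Y_1,…,Y_n}{A} = Σ X{A_1, Y_1{A_2}, A_3, Y_2{A_4}, …, A_{2n-1}, Y_n{A_{2n}}, A_{2n+1}}`,
the sum ranging over all decompositions of `A` into `2n+1` (possibly empty) consecutive
blocks. -/
structure BraceAlg (k V : Type*) [CommRing k] [AddCommGroup V] [Module k V] where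
  br : V → List V → V
  br_nil : ∀ X : V, br X [] = X
  br_linear_left : ∀ A : List V, IsLinearMap k fun X : V => br X A
  br_linear_arg : ∀ (X : V) (A B : List V) (a b : k) (Y Z : V),
    br X (A ++ (a • Y + b • Z) :: B) = a • br X (A ++ Y :: B) + b • br X (A ++ Z :: B)
  br_identity : ∀ (X : V) (Ys A : List V),
    br (br X Ys) A =
      ((cuts (2 * Ys.length + 1) A).map fun P => br X (interleave br Ys P)).sum

/-- The trilinear assembling map `c₁ ⊗ c₂ ⊗ c₃ ↦ f c₁ * g c₂ * h c₃` on an algebra. -/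
noncomputable def mix {k A : Type*} [CommRing k] [Ring A] [Algebra k A]
    (f g h : A →ₗ[k] A) : (A ⊗[k] A) ⊗[k] A →ₗ[k] A :=
  TensorProduct.lift ((LinearMap.mul k A).compl₁₂
    (TensorProduct.lift ((LinearMap.mul k A).compl₁₂ f g)) h)

/-- The right-hand side of the closed formula
`(X_1 ⊗ ⋯ ⊗ X_n) * B = B⁽¹⁾·X_1{B⁽²⁾}·B⁽³⁾ ⋯ B⁽²ⁿ⁻¹⁾·X_n{B⁽²ⁿ⁾}·B⁽²ⁿ⁺¹⁾`
(iterated Sweedler notation for the deconcatenation coproduct), defined by recursion on the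
word `[X_1, …, X_n]`. -/
noncomputable def sweedlerRHS {k V : Type*} [CommRing k] [AddCommGroup V] [Module k V]
    (Δ : TensorAlgebra k V →ₗ[k] TensorAlgebra k V ⊗[k] TensorAlgebra k V)
    (Br : V → TensorAlgebra k V →ₗ[k] V) :
    List V → TensorAlgebra k V →ₗ[k] TensorAlgebra k V
  | [] => LinearMap.id
  | X :: l =>
      (mix LinearMap.id (TensorAlgebra.ι k ∘ₗ Br X) (sweedlerRHS Δ Br l)) ∘ₗ
        (TensorProduct.map Δ LinearMap.id) ∘ₗ Δ


lemma listSum_range' {M : Type*} [AddCommMonoid M] (n : ℕ) (f : ℕ → M) :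
    ((List.range n).map f).sum = ∑ i ∈ Finset.range n, f i := by
  induction n with
  | zero => rfl
  | succ n ih => rw [Finset.sum_range_succ, List.range_succ]; simp [ih]

lemma sum_map_flatMap' {α β M : Type*} [AddCommMonoid M] (L : List α) (g : α → List β) (f : β → M) :
    ((L.flatMap g).map f).sum = (L.map fun a => ((g a).map f).sum).sum := by
  induction L with
  | nil => rfl
  | cons a L ih => simp [List.flatMap_cons, ih]

lemma sum_cuts_succ {V M : Type*} [AddCommMonoid M] (j : ℕ) (A : List V) (f : List (List V) → M) :
    ((cuts (j+1) A).map f).sum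
      = ∑ i ∈ Finset.range (A.length+1),
          ((cuts j (A.drop i)).map fun P => f (A.take i :: P)).sum := by
  show (((List.range (A.length+1)).flatMap fun i =>
      (cuts j (A.drop i)).map fun P => A.take i :: P).map f).sum = _
  rw [sum_map_flatMap', listSum_range']
  simp [List.map_map, Function.comp_def]

lemma cuts_one {V : Type*} (m : List V) : cuts 1 m = [[m]] := by
  show ((List.range (m.length+1)).flatMap fun i =>
      (cuts 0 (m.drop i)).map fun P => m.take i :: P) = [[m]]
  rw [List.range_succ, List.flatMap_append]
  have h1 : ((List.range m.length).flatMap fun i =>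
      (cuts 0 (m.drop i)).map fun P => m.take i :: P) = [] := by
    apply List.flatMap_eq_nil_iff.mpr
    intro i hi
    rw [List.mem_range] at hi
    have : ¬ (m.drop i).isEmpty := by
      simp [List.isEmpty_iff, List.drop_eq_nil_iff]; omega
    simp [cuts, this]
  rw [h1]
  simp [cuts, List.drop_length, List.take_length]

lemma sum_triangle {M : Type*} [AddCommMonoid M] (n : ℕ) (G : ℕ → ℕ → M) :
    ∑ i ∈ Finset.range (n+1), ∑ j ∈ Finset.range (i+1), G j (i-j)
      = ∑ j ∈ Finset.range (n+1), ∑ d ∈ Finset.range (n-j+1), G j d := by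
  rw [Finset.sum_sigma', Finset.sum_sigma']
  refine Finset.sum_nbij' (fun p => ⟨p.2, p.1 - p.2⟩) (fun p => ⟨p.1 + p.2, p.1⟩)
    ?_ ?_ ?_ ?_ ?_
  · rintro ⟨i, j⟩ h
    simp only [Finset.mem_sigma, Finset.mem_range] at *
    omega
  · rintro ⟨j, d⟩ h
    simp only [Finset.mem_sigma, Finset.mem_range] at *
    omega
  · rintro ⟨i, j⟩ h
    simp only [Finset.mem_sigma, Finset.mem_range] at h
    have hji : j + (i - j) = i := by omega
    dsimp only
    rw [hji]
  · rintro ⟨j, d⟩ h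
    simp only [Finset.mem_sigma, Finset.mem_range] at h
    have h1 : j + d - j = d := by omega
    dsimp only
    rw [h1]
  · rintro ⟨i, j⟩ h
    rfl

lemma mix_apply {k A : Type*} [CommRing k] [Ring A] [Algebra k A]
    (f g h : A →ₗ[k] A) (a b c : A) :
    mix f g h ((a ⊗ₜ[k] b) ⊗ₜ[k] c) = f a * g b * h c := by
  simp [mix, LinearMap.compl₁₂_apply]

lemma sum_map_mul_const {α M : Type*} [NonUnitalNonAssocSemiring M] (L : List α) (g : α → M) (c : M) :
    (L.map fun P => c * g P).sum = c * (L.map g).sum := by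
  induction L with
  | nil => simp
  | cons a L ih => simp [ih, mul_add]

set_option maxHeartbeats 1000000 in
/-- Let `k` be a commutative ring, `V` a brace algebra over `k`, and `*` the
product on the tensor coalgebra `T(V)` determined by `1 * B = B` and
`(X⊗A) * B = B⁽¹⁾·X{B⁽²⁾}·(A*B⁽³⁾)`.  Then:
(a) `(X_1 ⊗ ⋯ ⊗ X_n) * B = B⁽¹⁾·X_1{B⁽²⁾}·B⁽³⁾ ⋯ B⁽²ⁿ⁻¹⁾·X_n{B⁽²ⁿ⁾}·B⁽²ⁿ⁺¹⁾`;
(b) the brace identity takes the form `X{B}{C} = X{B * C}`. -/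
theorem brace_star_closed_formula
    (k V : Type*) [CommRing k] [AddCommGroup V] [Module k V]
    (b : BraceAlg k V)
    -- the deconcatenation coproduct on the tensor coalgebra `T(V)`
    (Δ : TensorAlgebra k V →ₗ[k] TensorAlgebra k V ⊗[k] TensorAlgebra k V)
    (hΔone : Δ 1 = 1 ⊗ₜ 1)
    (hΔ : ∀ (x : V) (B : TensorAlgebra k V),
      Δ (TensorAlgebra.ι k x * B) =
        1 ⊗ₜ (TensorAlgebra.ι k x * B) +
          TensorProduct.map (LinearMap.mulLeft k (TensorAlgebra.ι k x)) LinearMap.id (Δ B))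
    -- the counit: projection onto `V^{⊗0} = k`
    (ε : TensorAlgebra k V →ₗ[k] k)
    (hεone : ε 1 = 1)
    (hε : ∀ (x : V) (B : TensorAlgebra k V), ε (TensorAlgebra.ι k x * B) = 0)
    -- the `k`-linear extension of the braces to `V ⊗ T(V) → V`
    (Br : V → TensorAlgebra k V →ₗ[k] V)
    (hBrleft : ∀ B : TensorAlgebra k V, IsLinearMap k fun X : V => Br X B)
    (hBr : ∀ (X : V) (l : List V),
      Br X ((l.map (TensorAlgebra.ι k)).prod) = b.br X l)
    (star : TensorAlgebra k V →ₗ[k] TensorAlgebra k V →ₗ[k] TensorAlgebra k V)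
    (hstarone : ∀ B, star 1 B = B)
    (hstar : ∀ (x : V) (A B : TensorAlgebra k V),
      star (TensorAlgebra.ι k x * A) B =
        mix LinearMap.id (TensorAlgebra.ι k ∘ₗ Br x) (star A)
          ((TensorProduct.map Δ LinearMap.id) (Δ B))) :
    (∀ (l : List V) (B : TensorAlgebra k V),
      star ((l.map (TensorAlgebra.ι k)).prod) B = sweedlerRHS Δ Br l B) ∧
    (∀ (X : V) (B C : TensorAlgebra k V), Br (Br X B) C = Br X (star B C)) := by
  classical
  -- coproduct of monomials
  have hΔmono : ∀ m : List V,
      Δ ((m.map (TensorAlgebra.ι k)).prod)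
        = ∑ i ∈ Finset.range (m.length + 1),
            ((m.take i).map (TensorAlgebra.ι k)).prod ⊗ₜ[k]
              ((m.drop i).map (TensorAlgebra.ι k)).prod := by
    intro m
    induction m with
    | nil => simpa using hΔone
    | cons x m ih =>
        rw [List.map_cons, List.prod_cons, hΔ, ih, map_sum, List.length_cons]
        conv_rhs => rw [Finset.sum_range_succ']
        simp only [TensorProduct.map_tmul, LinearMap.mulLeft_apply, LinearMap.id_coe, id_eq,
          List.take_succ_cons, List.drop_succ_cons, List.take_zero, List.drop_zero,
          List.map_nil, List.prod_nil, List.map_cons, List.prod_cons]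
        rw [add_comm]
  have hBr' : ∀ (X : V) (s : List V),
      (TensorAlgebra.ι k ∘ₗ Br X) ((s.map (TensorAlgebra.ι k)).prod)
        = TensorAlgebra.ι k (b.br X s) := by
    intro X s; rw [LinearMap.comp_apply, hBr]
  -- part (a)
  have parta : ∀ (l : List V) (B : TensorAlgebra k V),
      star ((l.map (TensorAlgebra.ι k)).prod) B = sweedlerRHS Δ Br l B := by
    intro l
    induction l with
    | nil => intro B; simpa [sweedlerRHS] using hstarone B
    | cons x l ihl =>
        intro B
        rw [List.map_cons, List.prod_cons, hstar]
        have h2 : star ((l.map (TensorAlgebra.ι k)).prod) = sweedlerRHS Δ Br l :=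
          LinearMap.ext ihl
        rw [h2]
        rfl
  -- star of two monomials
  have hstarmono : ∀ (l m : List V),
      star ((l.map (TensorAlgebra.ι k)).prod) ((m.map (TensorAlgebra.ι k)).prod)
        = ((cuts (2 * l.length + 1) m).map
            fun P => ((interleave b.br l P).map (TensorAlgebra.ι k)).prod).sum := by
    intro l
    induction l with
    | nil =>
        intro m
        have h1 : 2 * ([] : List V).length + 1 = 1 := rfl
        rw [h1, cuts_one]
        simp [interleave, hstarone]
    | cons X l ih =>
        intro m
        have hR : ((cuts (2 * (X :: l).length + 1) m).map
              fun P => ((interleave b.br (X :: l) P).map (TensorAlgebra.ι k)).prod).sum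
            = ∑ j ∈ Finset.range (m.length + 1), ∑ d ∈ Finset.range (m.length - j + 1),
                ((m.take j).map (TensorAlgebra.ι k)).prod
                  * TensorAlgebra.ι k (b.br X ((m.drop j).take d))
                  * ((cuts (2 * l.length + 1) (m.drop (j + d))).map
                      fun P => ((interleave b.br l P).map (TensorAlgebra.ι k)).prod).sum := by
          have hnum : 2 * (X :: l).length + 1 = 2 * l.length + 1 + 1 + 1 := by
            rw [List.length_cons]; ring
          rw [hnum, sum_cuts_succ]
          refine Finset.sum_congr rfl fun j hj => ?_
          rw [sum_cuts_succ, List.length_drop]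
          refine Finset.sum_congr rfl fun d hd => ?_
          rw [List.drop_drop]
          have hfun : ∀ P : List (List V),
              ((interleave b.br (X :: l)
                  (m.take j :: (m.drop j).take d :: P)).map (TensorAlgebra.ι k)).prod
                = ((m.take j).map (TensorAlgebra.ι k)).prod *
                    (TensorAlgebra.ι k (b.br X ((m.drop j).take d)) *
                      ((interleave b.br l P).map (TensorAlgebra.ι k)).prod) := by
            intro P
            show ((m.take j ++ b.br X ((m.drop j).take d) ::
                interleave b.br l P).map (TensorAlgebra.ι k)).prod = _
            rw [List.map_append, List.prod_append, List.map_cons, List.prod_cons]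
          simp only [hfun]
          rw [sum_map_mul_const (cuts (2 * l.length + 1) (m.drop (j + d)))
              (fun P => (TensorAlgebra.ι k (b.br X ((m.drop j).take d)) *
                ((interleave b.br l P).map (TensorAlgebra.ι k)).prod))
              (((m.take j).map (TensorAlgebra.ι k)).prod),
            sum_map_mul_const (cuts (2 * l.length + 1) (m.drop (j + d)))
              (fun P => ((interleave b.br l P).map (TensorAlgebra.ι k)).prod)
              (TensorAlgebra.ι k (b.br X ((m.drop j).take d))),
            ← mul_assoc]
        rw [List.map_cons, List.prod_cons, hstar, hΔmono, map_sum, map_sum, hR]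
        trans (∑ i ∈ Finset.range (m.length + 1), ∑ j ∈ Finset.range (i + 1),
          ((m.take j).map (TensorAlgebra.ι k)).prod *
            TensorAlgebra.ι k (b.br X ((m.drop j).take (i - j))) *
            ((cuts (2 * l.length + 1) (m.drop (j + (i - j)))).map
              fun P => ((interleave b.br l P).map (TensorAlgebra.ι k)).prod).sum)
        · refine Finset.sum_congr rfl fun i hi => ?_
          rw [Finset.mem_range, Nat.lt_succ_iff] at hi
          rw [TensorProduct.map_tmul, hΔmono, TensorProduct.sum_tmul, map_sum]
          have hlen : (m.take i).length = i := by rw [List.length_take]; omega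
          rw [hlen]
          refine Finset.sum_congr rfl fun j hj => ?_
          rw [Finset.mem_range, Nat.lt_succ_iff] at hj
          rw [mix_apply]
          simp only [LinearMap.id_coe, id_eq]
          rw [List.take_take, min_eq_left hj, List.drop_take, hBr']
          have hji : j + (i - j) = i := by omega
          rw [hji, ih (m.drop i)]
        · exact sum_triangle m.length (fun j d =>
            ((m.take j).map (TensorAlgebra.ι k)).prod *
              TensorAlgebra.ι k (b.br X ((m.drop j).take d)) *
              ((cuts (2 * l.length + 1) (m.drop (j + d))).map
                fun P => ((interleave b.br l P).map (TensorAlgebra.ι k)).prod).sum)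
  -- part (b) on monomials
  have hkey : ∀ (X : V) (l m' : List V),
      Br (Br X ((l.map (TensorAlgebra.ι k)).prod)) ((m'.map (TensorAlgebra.ι k)).prod)
        = Br X (star ((l.map (TensorAlgebra.ι k)).prod)
            ((m'.map (TensorAlgebra.ι k)).prod)) := by
    intro X l m'
    rw [hBr, hBr, b.br_identity, hstarmono, map_list_sum, List.map_map]
    congr 1
    simp only [Function.comp_def, hBr]
  -- monomials span the tensor algebra
  have hspanmem : ∀ D : TensorAlgebra k V,
      D ∈ Submodule.span k (Set.range fun l : List V => ((l.map (TensorAlgebra.ι k)).prod)) := by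
    intro D
    induction D using TensorAlgebra.induction with
    | algebraMap r =>
        have h1 : (algebraMap k (TensorAlgebra k V)) r
            = r • ((([] : List V).map (TensorAlgebra.ι k)).prod) := by
          simp [Algebra.algebraMap_eq_smul_one]
        rw [h1]
        exact Submodule.smul_mem _ _ (Submodule.subset_span ⟨[], rfl⟩)
    | ι x => exact Submodule.subset_span ⟨[x], by simp⟩
    | mul a c ha hc =>
        have h := Submodule.mul_mem_mul ha hc
        rw [Submodule.span_mul_span] at h
        refine Submodule.span_le.mpr ?_ h
        rintro x hx
        rw [Set.mem_mul] at hx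
        obtain ⟨y, ⟨l, rfl⟩, z, ⟨m', rfl⟩, rfl⟩ := hx
        exact Submodule.subset_span ⟨l ++ m', by simp⟩
    | add a c ha hc => exact Submodule.add_mem _ ha hc
  refine ⟨parta, ?_⟩
  intro X B C
  refine Submodule.span_induction
    (p := fun B _ => ∀ C, Br (Br X B) C = Br X (star B C)) ?_ ?_ ?_ ?_ (hspanmem B) C
  · rintro _ ⟨l, rfl⟩ C
    refine Submodule.span_induction
      (p := fun C _ => Br (Br X ((l.map (TensorAlgebra.ι k)).prod)) C
        = Br X (star ((l.map (TensorAlgebra.ι k)).prod) C)) ?_ ?_ ?_ ?_ (hspanmem C)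
    · rintro _ ⟨m', rfl⟩
      exact hkey X l m'
    · simp
    · intro x y _ _ hx hy
      rw [map_add, map_add, hx, hy, map_add]
    · intro a x _ hx
      rw [map_smul, map_smul, hx, map_smul]
  · intro C
    have e0 : Br (0 : V) C = 0 := (hBrleft C).map_zero
    rw [(Br X).map_zero, e0, map_zero, LinearMap.zero_apply, (Br X).map_zero]
  · intro B1 B2 _ _ h1 h2 C
    have e1 : Br (Br X B1 + Br X B2) C = Br (Br X B1) C + Br (Br X B2) C :=
      (hBrleft C).map_add _ _
    rw [(Br X).map_add, e1, h1 C, h2 C, map_add, LinearMap.add_apply, (Br X).map_add]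
  · intro a B1 _ h1 C
    have e1 : Br (a • Br X B1) C = a • Br (Br X B1) C := (hBrleft C).map_smul a _
    rw [(Br X).map_smul, e1, h1 C, map_smul, LinearMap.smul_apply, (Br X).map_smul]
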